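/- Consider the ODE θ'(t) = S̄ · ((θ₂ − θ(t))/(θ₂ − θ₁))^γ with γ > 1, S̄ > 0, and initial data θ(0) = θ₀ ∈ (θ₁, θ₂). Then the unique solution satisfies θ(t) < θ₂ for all t ≥ 0, θ is strictly increasing, and θ(t) → θ₂ as t → ∞ (the temperature flattens toward but never reaches θ_vap₂ in finite time). -/

import Mathlib

/-!
Write `u = θ₂ - θ` for the distance to the vaporisation threshold, so that `u' = -a u^γ` with
`a = S / (θ₂ - θ₁)^γ` as long as `u > 0`. Then `u^(1-γ)` has constant derivative `a (γ - 1)`,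
i.e. `u(t)^(1-γ) = u(0)^(1-γ) + a (γ - 1) t`. If `u` reached `0` at a first time `T`, the left-hand
side would blow up as `t → T⁻` (because `1 - γ < 0`) while the right-hand side stays bounded; so `u`
stays positive, `θ' > 0`, and the same identity forces `u(t) → 0` as `t → ∞`.
-/

open Real Set Filter Topology

section NegRpowODE

variable {u : ℝ → ℝ} {a γ : ℝ}

theorem hasDerivAt_rpow_one_sub_of_hasDerivAt_neg_rpow {t : ℝ} (ht : 0 < u t)
    (hu : HasDerivAt u (-(a * u t ^ γ)) t) :
    HasDerivAt (fun s => u s ^ (1 - γ)) (a * (γ - 1)) t := by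
  convert hu.rpow_const (p := 1 - γ) (Or.inl ht.ne') using 1
  have hcancel : u t ^ γ * u t ^ (1 - γ - 1) = 1 := by rw [← rpow_add ht]; norm_num
  linear_combination (-(a * (γ - 1))) * hcancel

theorem rpow_one_sub_eq_of_pos_on_Ico {T : ℝ} (hpos : ∀ s ∈ Ico 0 T, 0 < u s)
    (hderiv : ∀ t ≥ 0, 0 < u t → HasDerivAt u (-(a * u t ^ γ)) t) :
    ∀ s ∈ Ico 0 T, u s ^ (1 - γ) = u 0 ^ (1 - γ) + a * (γ - 1) * s := by
  intro s hs
  have hsub : Icc 0 s ⊆ Ico 0 T := Icc_subset_Ico_right hs.2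
  have hpow : ∀ x ∈ Icc 0 s, HasDerivAt (fun s => u s ^ (1 - γ)) (a * (γ - 1)) x :=
    fun x hx => hasDerivAt_rpow_one_sub_of_hasDerivAt_neg_rpow (hpos x (hsub hx))
      (hderiv x (hsub hx).1 (hpos x (hsub hx)))
  have hline (x : ℝ) :
      HasDerivAt (fun x => u 0 ^ (1 - γ) + a * (γ - 1) * x) (a * (γ - 1)) x := by
    simpa using ((hasDerivAt_id x).const_mul (a * (γ - 1))).const_add (u 0 ^ (1 - γ))
  exact eq_of_has_deriv_right_eq
    (fun x hx => (hpow x (Ico_subset_Icc_self hx)).hasDerivWithinAt)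
    (fun x _ => (hline x).hasDerivWithinAt)
    (fun x hx => (hpow x hx).continuousAt.continuousWithinAt)
    (fun x _ => (hline x).continuousAt.continuousWithinAt) (by simp) s ⟨hs.1, le_rfl⟩

theorem pos_of_pos_on_Ico (hγ : 1 < γ) {T : ℝ} (hT : 0 < T)
    (hcont : ContinuousWithinAt u (Iio T) T) (hpos : ∀ s ∈ Ico 0 T, 0 < u s)
    (hderiv : ∀ t ≥ 0, 0 < u t → HasDerivAt u (-(a * u t ^ γ)) t) : 0 < u T := by
  have hev : ∀ᶠ s in 𝓝[<] T, s ∈ Ico 0 T := Ico_mem_nhdsLT hT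
  have hnonneg : 0 ≤ u T := ge_of_tendsto hcont (hev.mono fun s hs => (hpos s hs).le)
  refine hnonneg.lt_of_ne fun hzero => ?_
  have hto0 : Tendsto u (𝓝[<] T) (𝓝[>] 0) :=
    tendsto_nhdsWithin_of_tendsto_nhds_of_eventually_within u (hzero ▸ hcont) (hev.mono hpos)
  have hblow : Tendsto (fun s => u s ^ (1 - γ)) (𝓝[<] T) atTop :=
    (tendsto_rpow_neg_nhdsGT_zero (by linarith)).comp hto0
  have hline : Tendsto (fun s => u 0 ^ (1 - γ) + a * (γ - 1) * s) (𝓝[<] T)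
      (𝓝 (u 0 ^ (1 - γ) + a * (γ - 1) * T)) :=
    ((continuous_const.add (continuous_const.mul continuous_id)).tendsto T).mono_left
      nhdsWithin_le_nhds
  exact not_tendsto_atTop_of_tendsto_nhds
    (hline.congr' (hev.mono fun s hs => (rpow_one_sub_eq_of_pos_on_Ico hpos hderiv s hs).symm))
    hblow

theorem exists_first_nonpos (hcont : ContinuousOn u (Ici 0)) (hu0 : 0 < u 0) {t : ℝ}
    (ht : 0 ≤ t) (hut : u t ≤ 0) : ∃ T > 0, u T ≤ 0 ∧ ∀ s ∈ Ico 0 T, 0 < u s := by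
  set A := Ici 0 ∩ u ⁻¹' Iic 0
  have hclosed : IsClosed A := hcont.preimage_isClosed_of_isClosed isClosed_Ici isClosed_Iic
  have hbdd : BddBelow A := ⟨0, fun x hx => hx.1⟩
  have hmem : sInf A ∈ A := hclosed.csInf_mem ⟨t, ht, hut⟩ hbdd
  refine ⟨sInf A, hmem.1.lt_of_ne fun h => ?_, hmem.2, fun s hs => ?_⟩
  · exact (h ▸ hmem.2 : u 0 ≤ 0).not_gt hu0
  · by_contra! h
    exact (csInf_le hbdd ⟨hs.1, h⟩).not_gt hs.2

variable (hγ : 1 < γ) (hu0 : 0 < u 0) (hcont : ContinuousOn u (Ici 0))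
  (hderiv : ∀ t ≥ 0, 0 < u t → HasDerivAt u (-(a * u t ^ γ)) t)
include hγ hu0 hcont hderiv

theorem pos_of_hasDerivAt_neg_rpow : ∀ t ≥ 0, 0 < u t := by
  intro t ht
  by_contra! hut
  obtain ⟨T, hT, huT, hpos⟩ := exists_first_nonpos hcont hu0 ht hut
  have hcontT : ContinuousWithinAt u (Iio T) T :=
    (hcont T hT.le).mono_of_mem_nhdsWithin (mem_nhdsWithin_of_mem_nhds (Ici_mem_nhds hT))
  exact huT.not_gt (pos_of_pos_on_Ico hγ hT hcontT hpos hderiv)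

theorem rpow_one_sub_eq_of_hasDerivAt_neg_rpow :
    ∀ t ≥ 0, u t ^ (1 - γ) = u 0 ^ (1 - γ) + a * (γ - 1) * t := fun t ht =>
  rpow_one_sub_eq_of_pos_on_Ico (T := t + 1)
    (fun s hs => pos_of_hasDerivAt_neg_rpow hγ hu0 hcont hderiv s hs.1) hderiv t ⟨ht, by linarith⟩

theorem tendsto_zero_of_hasDerivAt_neg_rpow (ha : 0 < a) : Tendsto u atTop (𝓝 0) := by
  have hpos := pos_of_hasDerivAt_neg_rpow hγ hu0 hcont hderiv
  have hblow : Tendsto (fun t => u t ^ (1 - γ)) atTop atTop := by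
    have hline : Tendsto (fun t => u 0 ^ (1 - γ) + a * (γ - 1) * t) atTop atTop :=
      tendsto_atTop_add_const_left _ _
        (tendsto_id.const_mul_atTop (mul_pos ha (sub_pos.2 hγ)))
    exact hline.congr' ((eventually_ge_atTop 0).mono fun t ht =>
      (rpow_one_sub_eq_of_hasDerivAt_neg_rpow hγ hu0 hcont hderiv t ht).symm)
  refine ((tendsto_rpow_neg_atTop (inv_pos.2 (sub_pos.2 hγ))).comp hblow).congr'
    ((eventually_ge_atTop 0).mono fun t ht => ?_)
  have hexp : (1 - γ) * -(γ - 1)⁻¹ = 1 := by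
    field_simp [(sub_pos.2 hγ).ne']
    ring
  simp only [Function.comp_apply, ← rpow_mul (hpos t ht).le, hexp, rpow_one]

end NegRpowODE

theorem stmt_17 (θ₁ θ₂ γ S θ₀ : ℝ) (hθ : θ₁ < θ₂) (hγ : 1 < γ) (hS : 0 < S)
    (hθ₀ : θ₀ ∈ Set.Ioo θ₁ θ₂) (θ : ℝ → ℝ) (h0 : θ 0 = θ₀)
    (hode : ∀ t ≥ (0:ℝ), HasDerivAt θ (S * ((θ₂ - θ t) / (θ₂ - θ₁)) ^ γ) t) :
    (∀ t ≥ (0:ℝ), θ t < θ₂) ∧ StrictMonoOn θ (Set.Ici 0) ∧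
      Filter.Tendsto θ Filter.atTop (nhds θ₂) := by
  have hc : 0 < θ₂ - θ₁ := sub_pos.2 hθ
  have hcont : ContinuousOn θ (Ici 0) := fun t ht => (hode t ht).continuousAt.continuousWithinAt
  have hgap : ∀ t ≥ 0, 0 < θ₂ - θ t →
      HasDerivAt (fun s => θ₂ - θ s) (-(S / (θ₂ - θ₁) ^ γ * (θ₂ - θ t) ^ γ)) t := by
    intro t ht hpos
    refine ((hode t ht).const_sub θ₂).congr_deriv ?_
    rw [div_rpow hpos.le hc.le]
    ring
  have hgap0 : 0 < θ₂ - θ 0 := by rw [h0]; linarith [hθ₀.2]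
  have hgapcont : ContinuousOn (fun s => θ₂ - θ s) (Ici 0) := continuousOn_const.sub hcont
  have hbelow : ∀ t ≥ 0, θ t < θ₂ := fun t ht =>
    sub_pos.1 (pos_of_hasDerivAt_neg_rpow hγ hgap0 hgapcont hgap t ht)
  refine ⟨hbelow, ?_, ?_⟩
  · refine strictMonoOn_of_hasDerivWithinAt_pos (convex_Ici 0) hcont
      (fun t ht => (hode t (interior_subset ht)).hasDerivWithinAt) fun t ht => ?_
    rw [interior_Ici] at ht
    exact mul_pos hS (rpow_pos_of_pos (div_pos (sub_pos.2 (hbelow t ht.le)) hc) γ)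
  · have hgap_lim := tendsto_zero_of_hasDerivAt_neg_rpow hγ hgap0 hgapcont hgap
      (div_pos hS (rpow_pos_of_pos hc γ))
    simpa only [sub_sub_cancel, sub_zero] using (tendsto_const_nhds (x := θ₂)).sub hgap_lim
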